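/- arXiv:2101.09674 — 5 statements merged into one kernel-verified Lean document; each statement's English description precedes it below -/
import Mathlib

section
/- For every square complex matrix A and every natural number s, φ(A) = 2^{-s} · φ(X) · (e^X + I)(e^{2X} + I)···(e^{2^{s-1}X} + I), where X = 2^{-s} A. -/
/-!
The Cauchy product of `φ(M) = ∑ M^k/(k+1)!` with `e^M` has `n`-th coefficient
`∑_{j+l=n} 1/((j+1)! l!) = (2^{n+1} - 1)/(n+1)!`, so adding `φ(M)` gives the coefficients
`2^{n+1}/(n+1)!`, which is the doubling formula `φ(2M) = ½ φ(M) (e^M + 1)`.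
Applying it `s` times, starting from `X = 2^{-s} A`, gives the theorem.
-/

open NormedSpace Finset Nat

theorem sum_antidiagonal_inv_factorial_succ_mul_factorial {K : Type*} [Field K] [CharZero K]
    (n : ℕ) :
    ∑ p ∈ antidiagonal n, (((p.1 + 1)! : K) * p.2 !)⁻¹ = (2 ^ (n + 1) - 1) / (n + 1)! := by
  have hchoose : ∀ p ∈ antidiagonal n,
      (((p.1 + 1)! : K) * p.2 !)⁻¹ = ((n + 1).choose p.2 : K) / (n + 1)! := by
    rintro ⟨i, j⟩ hij
    rw [HasAntidiagonal.mem_antidiagonal] at hij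
    subst hij
    rw [show i + j + 1 = j + (i + 1) by ring, cast_add_choose,
      div_div_cancel_left' (cast_ne_zero.2 (factorial_ne_zero _)), mul_comm]
  have hsum : ∑ p ∈ antidiagonal n, ((n + 1).choose p.2 : K) = 2 ^ (n + 1) - 1 := by
    rw [← Nat.sum_antidiagonal_swap, Nat.sum_antidiagonal_eq_sum_range_succ_mk, eq_sub_iff_add_eq]
    have h := sum_range_succ (fun i => (n + 1).choose i) (n + 1)
    rw [sum_range_choose, choose_self] at h
    exact_mod_cast h.symm
  rw [sum_congr rfl hchoose, ← sum_div, hsum]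

section

variable (𝕂 : Type*) {𝔸 : Type*}

noncomputable def phi [Field 𝕂] [Ring 𝔸] [Module 𝕂 𝔸] [TopologicalSpace 𝔸] (M : 𝔸) : 𝔸 :=
  ∑' k : ℕ, ((k + 1)! : 𝕂)⁻¹ • M ^ k

variable {𝕂} [RCLike 𝕂] [NormedRing 𝔸] [NormedAlgebra 𝕂 𝔸]

theorem summable_norm_inv_factorial_succ_smul_pow (M : 𝔸) :
    Summable fun k : ℕ => ‖((k + 1)! : 𝕂)⁻¹ • M ^ k‖ := by
  refine .of_nonneg_of_le (fun k => norm_nonneg _) (fun k => ?_)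
    (norm_expSeries_summable' (𝕂 := 𝕂) M)
  rw [norm_smul, norm_smul, norm_inv, norm_inv, RCLike.norm_natCast, RCLike.norm_natCast]
  gcongr
  omega

variable [CompleteSpace 𝔸]

theorem hasSum_phi_mul_exp (M : 𝔸) :
    HasSum (fun n : ℕ => ((2 ^ (n + 1) - 1) / (n + 1)! : 𝕂) • M ^ n) (phi 𝕂 M * exp M) := by
  have hφ := summable_norm_inv_factorial_succ_smul_pow (𝕂 := 𝕂) M
  have hexp := norm_expSeries_summable' (𝕂 := 𝕂) M
  have hcoeff : ∀ n : ℕ,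
      ∑ p ∈ antidiagonal n, (((p.1 + 1)! : 𝕂)⁻¹ • M ^ p.1) * ((p.2 ! : 𝕂)⁻¹ • M ^ p.2) =
        ((2 ^ (n + 1) - 1) / (n + 1)! : 𝕂) • M ^ n := by
    intro n
    rw [← sum_antidiagonal_inv_factorial_succ_mul_factorial, sum_smul]
    refine sum_congr rfl fun p hp => ?_
    rw [smul_mul_smul_comm, ← pow_add, HasAntidiagonal.mem_antidiagonal.1 hp, mul_inv]
  rw [phi, exp_eq_tsum 𝕂, tsum_mul_tsum_eq_tsum_sum_antidiagonal_of_summable_norm hφ hexp]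
  simpa only [hcoeff] using
    (summable_norm_sum_mul_antidiagonal_of_summable_norm hφ hexp).of_norm.hasSum

theorem phi_two_smul (M : 𝔸) : phi 𝕂 ((2 : 𝕂) • M) = (2 : 𝕂)⁻¹ • (phi 𝕂 M * (exp M + 1)) := by
  have hφ : HasSum (fun n : ℕ => ((n + 1)! : 𝕂)⁻¹ • M ^ n) (phi 𝕂 M) :=
    (summable_norm_inv_factorial_succ_smul_pow (𝕂 := 𝕂) M).of_norm.hasSum
  have hsum := ((hasSum_phi_mul_exp (𝕂 := 𝕂) M).add hφ).const_smul (2 : 𝕂)⁻¹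
  rw [mul_add, mul_one, ← hsum.tsum_eq, phi]
  refine tsum_congr fun n => ?_
  rw [smul_pow, smul_smul, ← add_smul, smul_smul]
  congr 1
  field_simp
  ring

theorem phi_two_pow_smul (Y : 𝔸) (s : ℕ) :
    phi 𝕂 ((2 : 𝕂) ^ s • Y) =
      ((2 : 𝕂) ^ s)⁻¹ •
        (phi 𝕂 Y * ((List.range s).map fun i => exp ((2 : 𝕂) ^ i • Y) + 1).prod) := by
  induction s with
  | zero => simp
  | succ s ih =>
    rw [_root_.pow_succ', mul_smul, phi_two_smul, ih, List.range_succ, List.map_append,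
      List.prod_append, List.map_singleton, List.prod_singleton, smul_mul_assoc, mul_assoc,
      smul_smul, mul_inv]

end

/-- For every square complex matrix `A` and every `s : ℕ`,
`φ(A) = 2^{-s}·φ(X)·∏_{i=0}^{s-1}(e^{2^i X} + I)` where `X = 2^{-s} A`. -/
theorem matrix_phi_scaling_squaring (N : ℕ) (A : Matrix (Fin N) (Fin N) ℂ) (s : ℕ)
    (X : Matrix (Fin N) (Fin N) ℂ) (hX : X = ((2 : ℂ) ^ s)⁻¹ • A) :
    (∑' k : ℕ, ((Nat.factorial (k + 1) : ℂ))⁻¹ • A ^ k) =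
      ((2 : ℂ) ^ s)⁻¹ •
        ((∑' k : ℕ, ((Nat.factorial (k + 1) : ℂ))⁻¹ • X ^ k) *
          ((List.range s).map (fun i => NormedSpace.exp (((2 : ℂ) ^ i) • X) + 1)).prod) := by
  -- Any submultiplicative matrix norm would do: it induces the product topology in which the
  -- series of the statement are summed.
  let : NormedRing (Matrix (Fin N) (Fin N) ℂ) := Matrix.linftyOpNormedRing
  let : NormedAlgebra ℂ (Matrix (Fin N) (Fin N) ℂ) := Matrix.linftyOpNormedAlgebra
  subst hX
  have h := phi_two_pow_smul (𝕂 := ℂ) (((2 : ℂ) ^ s)⁻¹ • A) s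
  rwa [smul_inv_smul₀ (pow_ne_zero s two_ne_zero)] at h
end

section
/- For every square complex matrix A and every positive integer s, with Y = (1/s)A, one has φ(A) = (1/s) · φ(Y) · (e^{(s-1)Y} + e^{(s-2)Y} + ··· + e^{Y} + I), i.e., φ(A) = (1/s) · φ(Y) · Σ_{i=0}^{s-1} e^{iY}. -/
/-!
In `𝕂⟦X⟧` we have `X φ(X) = eˣ - 1`, hence, after rescaling and telescoping,
`s X φ(sX) = e^{sX} - 1 = (eˣ - 1) ∑_{i<s} e^{iX} = X φ(X) ∑_{i<s} e^{iX}`; cancelling `X` gives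
the formal identity `s φ(sX) = φ(X) ∑_{i<s} e^{iX}`. Evaluating power series at a fixed element of
a Banach algebra is multiplicative on absolutely convergent series (Cauchy product), so the
identity holds at `X = Y`.
-/
open Finset

namespace PowerSeries

section Formal

variable (A : Type*) [CommRing A] [Algebra ℚ A]

noncomputable def phi : A⟦X⟧ := mk fun n => algebraMap ℚ A (1 / (n + 1).factorial)

theorem X_mul_phi : X * phi A = exp A - 1 := by
  ext (_ | n)
  · simp
  · rw [coeff_succ_X_mul, map_sub, coeff_exp, coeff_one, if_neg n.succ_ne_zero, sub_zero, phi,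
      coeff_mk]

theorem natCast_smul_rescale_phi (s : ℕ) :
    (s : A) • rescale (s : A) (phi A) = phi A * ∑ i ∈ range s, rescale (i : A) (exp A) := by
  apply X_mul_cancel
  have hsucc (i : ℕ) : exp A * rescale (i : A) (exp A) = rescale ((i + 1 : ℕ) : A) (exp A) := by
    rw [Nat.cast_succ, add_comm, ← exp_mul_exp_eq_exp_add, rescale_one, RingHom.id_apply]
  calc X * ((s : A) • rescale (s : A) (phi A))
      = rescale (s : A) (X * phi A) := by
        rw [map_mul, rescale_X, smul_eq_C_mul]; ring
    _ = ∑ i ∈ range s, (rescale ((i + 1 : ℕ) : A) (exp A) - rescale (i : A) (exp A)) := by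
        rw [sum_range_sub (fun i => rescale (i : A) (exp A)), X_mul_phi, map_sub, map_one,
          Nat.cast_zero, rescale_zero, RingHom.comp_apply, constantCoeff_exp, map_one]
    _ = X * (phi A * ∑ i ∈ range s, rescale (i : A) (exp A)) := by
        rw [← mul_assoc, X_mul_phi, sub_mul, one_mul, mul_sum, ← sum_sub_distrib]
        simp only [hsucc]

end Formal

section Evaluation

variable {𝕂 𝔸 : Type*} [NormedField 𝕂] [NormedRing 𝔸] [NormedAlgebra 𝕂 𝔸]

noncomputable def tsumEval (f : 𝕂⟦X⟧) (B : 𝔸) : 𝔸 := ∑' n, coeff n f • B ^ n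

def AbsSummableAt (f : 𝕂⟦X⟧) (B : 𝔸) : Prop := Summable fun n => ‖coeff n f • B ^ n‖

theorem coeff_rescale_smul_pow (f : 𝕂⟦X⟧) (c : 𝕂) (B : 𝔸) (n : ℕ) :
    coeff n (rescale c f) • B ^ n = coeff n f • (c • B) ^ n := by
  rw [coeff_rescale, smul_pow, smul_smul, mul_comm]

theorem tsumEval_rescale (f : 𝕂⟦X⟧) (c : 𝕂) (B : 𝔸) :
    tsumEval (rescale c f) B = tsumEval f (c • B) :=
  tsum_congr (coeff_rescale_smul_pow f c B)

theorem absSummableAt_rescale {f : 𝕂⟦X⟧} {c : 𝕂} {B : 𝔸} :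
    AbsSummableAt (rescale c f) B ↔ AbsSummableAt f (c • B) := by
  simp only [AbsSummableAt, coeff_rescale_smul_pow]

theorem tsumEval_smul (a : 𝕂) (f : 𝕂⟦X⟧) (B : 𝔸) :
    tsumEval (a • f) B = a • tsumEval f B := by
  simp only [tsumEval, coeff_smul, smul_eq_mul, mul_smul, tsum_const_smul'']

theorem coeff_mul_smul_pow (f g : 𝕂⟦X⟧) (B : 𝔸) (n : ℕ) :
    coeff n (f * g) • B ^ n =
      ∑ kl ∈ antidiagonal n, (coeff kl.1 f • B ^ kl.1) * (coeff kl.2 g • B ^ kl.2) := by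
  rw [coeff_mul, sum_smul]
  refine sum_congr rfl fun kl hkl => ?_
  rw [smul_mul_smul_comm, ← pow_add, mem_antidiagonal.mp hkl]

theorem AbsSummableAt.sum {ι : Type*} {t : Finset ι} {f : ι → 𝕂⟦X⟧} {B : 𝔸}
    (hf : ∀ i ∈ t, AbsSummableAt (f i) B) : AbsSummableAt (∑ i ∈ t, f i) B := by
  refine (summable_sum hf).of_nonneg_of_le (fun _ => norm_nonneg _) fun n => ?_
  rw [map_sum, sum_smul]
  exact norm_sum_le _ _

variable [CompleteSpace 𝔸]

theorem tsumEval_mul {f g : 𝕂⟦X⟧} {B : 𝔸} (hf : AbsSummableAt f B) (hg : AbsSummableAt g B) :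
    tsumEval (f * g) B = tsumEval f B * tsumEval g B := by
  simp only [tsumEval, coeff_mul_smul_pow]
  exact (tsum_mul_tsum_eq_tsum_sum_antidiagonal_of_summable_norm hf hg).symm

theorem tsumEval_sum {ι : Type*} {t : Finset ι} {f : ι → 𝕂⟦X⟧} {B : 𝔸}
    (hf : ∀ i ∈ t, AbsSummableAt (f i) B) :
    tsumEval (∑ i ∈ t, f i) B = ∑ i ∈ t, tsumEval (f i) B := by
  simp only [tsumEval, map_sum, sum_smul]
  exact Summable.tsum_finsetSum fun i hi => (hf i hi).of_norm

end Evaluation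

section Exponential

variable {𝕂 𝔸 : Type*} [RCLike 𝕂] [NormedRing 𝔸] [NormedAlgebra 𝕂 𝔸]

theorem coeff_exp_smul_pow (B : 𝔸) (n : ℕ) :
    coeff n (exp 𝕂) • B ^ n = (n.factorial⁻¹ : 𝕂) • B ^ n := by
  simp [coeff_exp]

theorem absSummableAt_exp (B : 𝔸) : AbsSummableAt (exp 𝕂) B := by
  simpa only [AbsSummableAt, coeff_exp_smul_pow] using NormedSpace.norm_expSeries_summable' B

theorem tsumEval_exp (B : 𝔸) : tsumEval (exp 𝕂) B = NormedSpace.exp B := by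
  simp only [tsumEval, coeff_exp_smul_pow, NormedSpace.exp_eq_tsum 𝕂]

theorem coeff_phi_smul_pow (B : 𝔸) (n : ℕ) :
    coeff n (phi 𝕂) • B ^ n = ((n + 1).factorial⁻¹ : 𝕂) • B ^ n := by
  simp [phi]

theorem absSummableAt_phi (B : 𝔸) : AbsSummableAt (phi 𝕂) B := by
  refine (NormedSpace.norm_expSeries_summable' (𝕂 := 𝕂) B).of_nonneg_of_le
    (fun _ => norm_nonneg _) fun n => ?_
  rw [coeff_phi_smul_pow, norm_smul, norm_smul, norm_inv, norm_inv, RCLike.norm_natCast,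
    RCLike.norm_natCast]
  gcongr
  exact n.le_succ

theorem tsumEval_phi (B : 𝔸) :
    tsumEval (phi 𝕂) B = ∑' n, ((n + 1).factorial⁻¹ : 𝕂) • B ^ n :=
  tsum_congr (coeff_phi_smul_pow B)

end Exponential

end PowerSeries

open PowerSeries

theorem tsum_phi_natCast_smul {𝕂 𝔸 : Type*} [RCLike 𝕂] [NormedRing 𝔸] [NormedAlgebra 𝕂 𝔸]
    [CompleteSpace 𝔸] (B : 𝔸) {s : ℕ} (hs : s ≠ 0) :
    ∑' k, ((k + 1).factorial⁻¹ : 𝕂) • ((s : 𝕂) • B) ^ k =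
      (s : 𝕂)⁻¹ • ((∑' k, ((k + 1).factorial⁻¹ : 𝕂) • B ^ k) *
        ∑ i ∈ range s, NormedSpace.exp ((i : 𝕂) • B)) := by
  have hs₀ : (s : 𝕂) ≠ 0 := Nat.cast_ne_zero.mpr hs
  have hexp : ∀ i ∈ range s, AbsSummableAt (rescale (i : 𝕂) (exp 𝕂)) B :=
    fun i _ => absSummableAt_rescale.mpr (absSummableAt_exp _)
  calc ∑' k, ((k + 1).factorial⁻¹ : 𝕂) • ((s : 𝕂) • B) ^ k
      = (s : 𝕂)⁻¹ • tsumEval ((s : 𝕂) • rescale (s : 𝕂) (phi 𝕂)) B := by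
        rw [tsumEval_smul, inv_smul_smul₀ hs₀, tsumEval_rescale, tsumEval_phi]
    _ = (s : 𝕂)⁻¹ •
          (tsumEval (phi 𝕂) B * ∑ i ∈ range s, tsumEval (rescale (i : 𝕂) (exp 𝕂)) B) := by
        rw [natCast_smul_rescale_phi, tsumEval_mul (absSummableAt_phi B) (AbsSummableAt.sum hexp),
          tsumEval_sum hexp]
    _ = _ := by simp only [tsumEval_phi, tsumEval_rescale, tsumEval_exp]

/-- For every square complex matrix `A` and positive integer `s`, with
`Y = (1/s)A`, `φ(A) = (1/s)·φ(Y)·∑_{i=0}^{s-1} e^{iY}`. -/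
theorem matrix_phi_sum_recurrence (N : ℕ) (A : Matrix (Fin N) (Fin N) ℂ) (s : ℕ) (hs : 1 ≤ s)
    (Y : Matrix (Fin N) (Fin N) ℂ) (hY : Y = ((s : ℂ))⁻¹ • A) :
    (∑' k : ℕ, ((Nat.factorial (k + 1) : ℂ))⁻¹ • A ^ k) =
      ((s : ℂ))⁻¹ •
        ((∑' k : ℕ, ((Nat.factorial (k + 1) : ℂ))⁻¹ • Y ^ k) *
          ∑ i ∈ Finset.range s, NormedSpace.exp ((i : ℂ) • Y)) := by
  -- The series only see the topology, so any Banach-algebra norm on matrices will do.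
  let : NormedRing (Matrix (Fin N) (Fin N) ℂ) := Matrix.linftyOpNormedRing
  let : NormedAlgebra ℂ (Matrix (Fin N) (Fin N) ℂ) := Matrix.linftyOpNormedAlgebra
  have hA : A = (s : ℂ) • Y := by rw [hY, smul_inv_smul₀ (Nat.cast_ne_zero.mpr (by omega))]
  subst hA
  exact tsum_phi_natCast_smul Y (by omega)
end

section
/- Suppose X ∈ ℂ^{N×N} satisfies ρ(e^{-X}·T̃_m(X) − I) < 1 (spectral radius condition), and let h_{m+2}(X) = log(e^{-X}·T̃_m(X)) be the principal matrix logarithm. Then T̃_m(X) = e^{X + h_{m+2}(X)} and X commutes with h_{m+2}(X). -/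
/-!
Write `L(a) = ∑ₖ (-1)ᵏ aᵏ⁺¹/(k+1)`. By Gelfand's formula, `ρ(a) < 1` gives `‖aⁿ‖ ≤ C rⁿ` with
`r < 1`, so `w ↦ L(w • a)` is holomorphic on a disc of radius `> 1`, with derivative
`(∑ₖ (-w • a)ᵏ) a = (1 + w • a)⁻¹ a`. In a commutative Banach algebra the function
`w ↦ exp(-L(w • a)) (1 + w • a)` therefore has derivative zero, and comparing `w = 0` with
`w = 1` gives `exp(L(a)) = 1 + a`. In general one works in the closed subalgebra generated by
`a`, which is commutative. For `E = e^{-X} T̃ₘ(X) - I`, a power series in `X`, this gives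
`e^h = e^{-X} T̃ₘ(X)` with `h` commuting with `X`, so `e^{X+h} = e^X e^h = T̃ₘ(X)`.
-/

open Filter NormedSpace
open scoped NNReal

section TopologicalAlgebra

variable {A : Type*} [Ring A] [Algebra ℂ A] [TopologicalSpace A]

noncomputable def logOneAdd (a : A) : A :=
  ∑' k : ℕ, ((-1 : ℂ) ^ k / (k + 1)) • a ^ (k + 1)

@[simp]
theorem logOneAdd_zero : logOneAdd (0 : A) = 0 := by
  simp [logOneAdd]

theorem Commute.logOneAdd_right [IsTopologicalRing A] [T2Space A] {a b : A} (h : Commute b a) :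
    Commute b (logOneAdd a) :=
  .tsum_right b fun _ => (h.pow_right _).smul_right _

end TopologicalAlgebra

theorem summable_pow_of_norm_pow_le {R : Type*} [NormedRing R] [CompleteSpace R] {a : R} {C r : ℝ}
    (hr0 : 0 ≤ r) (hr1 : r < 1) (ha : ∀ n : ℕ, ‖a ^ n‖ ≤ C * r ^ n) : Summable (a ^ ·) :=
  .of_norm_bounded ((summable_geometric_of_lt_one hr0 hr1).mul_left C) ha

section BanachAlgebra

variable {A : Type*} [NormedRing A] [NormedAlgebra ℂ A] [CompleteSpace A]

theorem exists_norm_pow_le_mul_pow_of_spectralRadius_lt {a : A} {r : ℝ≥0}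
    (h : spectralRadius ℂ a < r) : ∃ C : ℝ, ∀ n : ℕ, ‖a ^ n‖ ≤ C * r ^ n := by
  have hr : 0 < r := by exact_mod_cast pos_of_gt h
  have hev : ∀ᶠ n : ℕ in atTop, ‖a ^ n‖ ≤ ‖(r : ℝ) ^ n‖ := by
    filter_upwards
      [(spectrum.pow_nnnorm_pow_one_div_tendsto_nhds_spectralRadius a).eventually_lt_const h,
      eventually_gt_atTop 0] with n hn hn0
    rw [one_div, ENNReal.rpow_inv_lt_iff (by positivity), ENNReal.rpow_natCast] at hn
    rw [Real.norm_of_nonneg (by positivity)]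
    exact_mod_cast hn.le
  obtain ⟨C, hC⟩ := (Asymptotics.isBigO_nat_atTop_iff fun n hn => absurd hn (by positivity)).mp
    (Asymptotics.IsBigO.of_bound' hev)
  exact ⟨C, fun n => by simpa [abs_of_nonneg r.2] using hC n⟩

theorem summable_smul_pow_of_norm_pow_le {a : A} {C r : ℝ} (hr0 : 0 ≤ r)
    (ha : ∀ n : ℕ, ‖a ^ n‖ ≤ C * r ^ n) {z : ℂ} (hz : ‖z‖ * r < 1) : Summable ((z • a) ^ ·) := by
  refine summable_pow_of_norm_pow_le (C := C) (by positivity) hz fun n => ?_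
  rw [smul_pow, norm_smul, norm_pow, mul_pow, mul_left_comm]
  exact mul_le_mul_of_nonneg_left (ha n) (by positivity)

theorem hasDerivAt_logOneAdd_smul {a : A} {C r T : ℝ} (hr0 : 0 ≤ r) (hT : T * r < 1)
    (ha : ∀ n : ℕ, ‖a ^ n‖ ≤ C * r ^ n) {z : ℂ} (hz : ‖z‖ < T) :
    HasDerivAt (fun w : ℂ => logOneAdd (w • a)) ((∑' k : ℕ, ((-z) • a) ^ k) * a) z := by
  have hterm (k : ℕ) (w : ℂ) :
      HasDerivAt (fun w : ℂ => ((-1 : ℂ) ^ k / (k + 1)) • (w • a) ^ (k + 1))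
        (((-w) • a) ^ k * a) w := by
    have hcoeff : (-1 : ℂ) ^ k / (k + 1) * ((k + 1 : ℕ) * w ^ k) = (-w) ^ k := by
      rw [neg_pow w]; push_cast; field_simp
    have hf : (fun w : ℂ => ((-1 : ℂ) ^ k / (k + 1)) • (w • a) ^ (k + 1)) =
        fun w => ((-1 : ℂ) ^ k / (k + 1) * w ^ (k + 1)) • a ^ (k + 1) := by
      funext w; rw [smul_pow, smul_smul]
    rw [hf, smul_pow, smul_mul_assoc, ← pow_succ, ← hcoeff]
    simpa using ((hasDerivAt_pow (k + 1) w).const_mul ((-1 : ℂ) ^ k / (k + 1))).smul_const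
      (a ^ (k + 1))
  have hbound (k : ℕ) (w : ℂ) (hw : w ∈ Metric.ball (0 : ℂ) T) :
      ‖((-w) • a) ^ k * a‖ ≤ C * r * (T * r) ^ k := by
    rw [smul_pow, smul_mul_assoc, ← pow_succ, norm_smul, norm_pow, norm_neg]
    have hw' : ‖w‖ ≤ T := by simpa using (Metric.mem_ball.mp hw).le
    calc ‖w‖ ^ k * ‖a ^ (k + 1)‖ ≤ T ^ k * (C * r ^ (k + 1)) :=
          mul_le_mul (pow_le_pow_left₀ (norm_nonneg w) hw' k) (ha _) (norm_nonneg _)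
            (pow_nonneg ((norm_nonneg w).trans hw') k)
      _ = C * r * (T * r) ^ k := by ring
  have hz' : z ∈ Metric.ball (0 : ℂ) T := by simpa using hz
  have h0 : (0 : ℂ) ∈ Metric.ball (0 : ℂ) T := Metric.mem_ball_self ((norm_nonneg z).trans_lt hz)
  have hT0 : 0 ≤ T * r := mul_nonneg ((norm_nonneg z).trans hz.le) hr0
  have hsum : Summable (((-z) • a) ^ ·) := summable_smul_pow_of_norm_pow_le hr0 ha
    (by rw [norm_neg]; exact lt_of_le_of_lt (mul_le_mul_of_nonneg_right hz.le hr0) hT)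
  rw [← hsum.tsum_mul_right]
  exact hasDerivAt_tsum_of_isPreconnected
    ((summable_geometric_of_lt_one hT0 hT).mul_left (C * r)) Metric.isOpen_ball
    (convex_ball (0 : ℂ) T).isPreconnected (fun k w _ => hterm k w) hbound h0 (by simp) hz'

end BanachAlgebra

section CommBanachAlgebra

variable {A : Type*} [NormedCommRing A] [NormedAlgebra ℂ A] [CompleteSpace A]

theorem exp_logOneAdd_of_norm_pow_le {a : A} {C r : ℝ} (hr0 : 0 ≤ r) (hr1 : r < 1)
    (ha : ∀ n : ℕ, ‖a ^ n‖ ≤ C * r ^ n) : exp (logOneAdd a) = 1 + a := by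
  let _ : NormedAlgebra ℚ A := .restrictScalars ℚ ℂ A
  obtain ⟨T, h1T, hT⟩ : ∃ T : ℝ, 1 < T ∧ T * r < 1 :=
    ⟨2 / (1 + r), by rw [one_lt_div (by positivity)]; linarith,
      by rw [div_mul_eq_mul_div, div_lt_one (by positivity)]; linarith⟩
  set φ : ℂ → A := fun w => exp (-logOneAdd (w • a)) * (1 + w • a)
  have hφ : ∀ w ∈ Metric.ball (0 : ℂ) T, HasDerivAt φ 0 w := by
    intro w hw
    have hw : ‖w‖ < T := mem_ball_zero_iff.mp hw
    have hL := (hasDerivAt_logOneAdd_smul hr0 hT ha hw).neg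
    have hE := (hasFDerivAt_exp (𝕂 := ℂ) (x := -logOneAdd (w • a))).comp_hasDerivAt w hL
    have hlin : HasDerivAt (fun w : ℂ => 1 + w • a) a w := by
      simpa using ((hasDerivAt_id w).smul_const a).const_add 1
    have hgeom := (summable_smul_pow_of_norm_pow_le hr0 ha (z := -w) (by
      rw [norm_neg]
      exact lt_of_le_of_lt (mul_le_mul_of_nonneg_right hw.le hr0) hT)).one_sub_mul_tsum_pow
    have hinv : (∑' k : ℕ, ((-w) • a) ^ k) * (1 + w • a) = 1 := by
      rw [mul_comm]
      convert hgeom using 2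
      rw [neg_smul, sub_neg_eq_add]
    convert hE.mul hlin using 1
    · rfl
    · simp only [smul_apply, one_apply_eq_self, smul_eq_mul,
        Function.comp_apply, Pi.neg_apply]
      linear_combination (exp (-logOneAdd (w • a)) * a) * hinv
  have hconst : φ 1 = φ 0 := Metric.isOpen_ball.is_const_of_deriv_eq_zero
    (convex_ball 0 T).isPreconnected (fun w hw => (hφ w hw).differentiableAt.differentiableWithinAt)
    (fun w hw => (hφ w hw).deriv) (by simpa using h1T) (Metric.mem_ball_self (by linarith))
  simp only [one_smul, zero_smul, logOneAdd_zero, neg_zero, exp_zero, add_zero, mul_one, φ]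
    at hconst
  calc exp (logOneAdd a) = exp (logOneAdd a) * (exp (-logOneAdd a) * (1 + a)) := by
        rw [hconst, mul_one]
    _ = 1 + a := by rw [← mul_assoc, ← exp_add, add_neg_cancel, exp_zero, one_mul]

end CommBanachAlgebra

section BanachAlgebra

variable {A : Type*} [NormedRing A] [NormedAlgebra ℂ A] [CompleteSpace A]

theorem exp_logOneAdd {a : A} (ha : spectralRadius ℂ a < 1) : exp (logOneAdd a) = 1 + a := by
  obtain ⟨r, har, hr1⟩ := ENNReal.lt_iff_exists_nnreal_btwn.mp ha
  obtain ⟨C, hC⟩ := exists_norm_pow_le_mul_pow_of_spectralRadius_lt har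
  let B := Algebra.elemental ℂ a
  let _ : NormedCommRing B := { (inferInstance : NormedRing B) with mul_comm := mul_comm }
  let _ : NormedAlgebra ℚ A := .restrictScalars ℚ ℂ A
  let _ : NormedAlgebra ℚ B := .restrictScalars ℚ ℂ B
  let b : B := ⟨a, Algebra.elemental.self_mem ℂ a⟩
  have hb : exp (logOneAdd b) = 1 + b :=
    exp_logOneAdd_of_norm_pow_le r.2 (by exact_mod_cast hr1) hC
  have hval : B.val (logOneAdd b) = logOneAdd a :=
    (Algebra.elemental.isClosedEmbedding_coe (R := ℂ) a).map_tsum _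
  rw [← hval, ← map_exp B.val continuous_subtype_val, hb, map_add, map_one]
  rfl

end BanachAlgebra

/-- If `ρ(e^{-X}·T̃_m(X) − I) < 1`, and
`h = log(e^{-X}·T̃_m(X))` is the principal matrix logarithm (defined by the series
`log(I+E) = ∑_{k=1}^∞ (−1)^{k+1} E^k/k`), then `T̃_m(X) = e^{X+h}` and `X` commutes
with `h`. -/
theorem log_backward_error (N : ℕ) (X : Matrix (Fin N) (Fin N) ℂ) (m : ℕ)
    (Tt h : Matrix (Fin N) (Fin N) ℂ)
    (hTt : Tt = ∑ k ∈ Finset.range (m + 2), ((Nat.factorial k : ℂ))⁻¹ • X ^ k)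
    (hρ : spectralRadius ℂ (NormedSpace.exp (-X) * Tt - 1) < 1)
    (hh : h = ∑' k : ℕ, ((-1 : ℂ) ^ k / (k + 1)) • (NormedSpace.exp (-X) * Tt - 1) ^ (k + 1)) :
    Tt = NormedSpace.exp (X + h) ∧ Commute X h := by
  have hh : h = logOneAdd (exp (-X) * Tt - 1) := hh
  have hXTt : Commute X Tt := hTt ▸
    Commute.sum_right _ _ _ fun k _ => ((Commute.refl X).pow_right k).smul_right _
  have hXE : Commute X (exp (-X) * Tt - 1) :=
    ((Commute.refl X).neg_right.exp_right.mul_right hXTt).sub_right (.one_right X)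
  have hXh : Commute X h := hh ▸ hXE.logOneAdd_right
  have hexp : exp h = exp (-X) * Tt := by
    rw [hh]
    -- The statement involves no norm: any Banach-algebra norm on matrices will do.
    open scoped Matrix.Norms.Operator in exact (exp_logOneAdd hρ).trans (add_sub_cancel _ _)
  refine ⟨?_, hXh⟩
  rw [Matrix.exp_add_of_commute _ _ hXh, hexp, ← mul_assoc,
    ← Matrix.exp_add_of_commute _ _ (Commute.refl X).neg_right, add_neg_cancel, exp_zero, one_mul]
end

section
/- For a submultiplicative matrix norm ‖·‖ and any N×N complex matrix A and positive integers p, define α_p(A) = max(‖A^p‖^{1/p}, ‖A^{p+1}‖^{1/(p+1)}). Then for any integer k ≥ p(p−1) with k ≥ 1, ‖A^k‖^{1/k} ≤ α_p(A). -/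
/-!
Since `p` and `p + 1` are coprime, the Frobenius number of `{p, p + 1}` is
`p (p + 1) - p - (p + 1) = p (p - 1) - 1`, so every `k ≥ p (p - 1)` is `i p + j (p + 1)` with
`i, j ≥ 0`. Submultiplicativity then gives `ν (A ^ k) ≤ ν (A ^ p) ^ i * ν (A ^ (p + 1)) ^ j`, and each
factor is at most the corresponding power of `α = α_p(A)`, whence `ν (A ^ k) ≤ α ^ k`.
-/

open Real

lemma Real.rpow_one_div_le_iff_le_pow {x c : ℝ} {n : ℕ} (hx : 0 ≤ x) (hc : 0 ≤ c) (hn : n ≠ 0) :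
    x ^ ((1 : ℝ) / n) ≤ c ↔ x ≤ c ^ n := by
  rw [one_div, rpow_inv_le_iff_of_pos hx hc (by positivity), rpow_natCast]

lemma Nat.mem_addSubmonoidClosure_pair_of_mul_pred_le {p k : ℕ} (hk : p * (p - 1) ≤ k) :
    k ∈ AddSubmonoid.closure {p, p + 1} := by
  rcases lt_or_ge p 2 with hp | hp
  · have h1 : 1 ∈ AddSubmonoid.closure ({p, p + 1} : Set ℕ) :=
      AddSubmonoid.subset_closure (by interval_cases p <;> simp)
    simpa using AddSubmonoid.nsmul_mem _ h1 k
  · have hfrob := frobeniusNumber_pair (Nat.coprime_self_add_right.2 (Nat.coprime_one_right p))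
      (by omega) (by omega : 1 < p + 1)
    refine (frobeniusNumber_iff.1 hfrob).2 k ?_
    rw [Nat.mul_sub_one] at hk
    rw [Nat.mul_add_one]
    have : 2 * p ≤ p * p := Nat.mul_le_mul_right p hp
    omega

lemma pow_le_pow_of_mem_addSubmonoidClosure {M : Type*} [Monoid M] {ν : M → ℝ}
    (hnonneg : ∀ x, 0 ≤ ν x) (hmul : ∀ x y, ν (x * y) ≤ ν x * ν y) {a : M} {c : ℝ} {s : Set ℕ}
    (hs : ∀ n ∈ s, ν (a ^ n) ≤ c ^ n) {k : ℕ} (hk : k ∈ AddSubmonoid.closure s) (hk0 : k ≠ 0) :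
    ν (a ^ k) ≤ c ^ k := by
  -- `ν (a ^ 0) = ν 1` need not be `≤ 1`, so `0` is carried along as an exception.
  suffices k = 0 ∨ ν (a ^ k) ≤ c ^ k from this.resolve_left hk0
  clear hk0
  induction hk using AddSubmonoid.closure_induction with
  | mem n hn => exact .inr (hs n hn)
  | zero => exact .inl rfl
  | add m n _ _ hm hn =>
    rcases hm with rfl | hm
    · simpa using hn
    rcases hn with rfl | hn
    · simpa using Or.inr hm
    refine .inr ?_
    calc ν (a ^ (m + n)) ≤ ν (a ^ m) * ν (a ^ n) := pow_add a m n ▸ hmul _ _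
      _ ≤ c ^ m * c ^ n := mul_le_mul hm hn (hnonneg _) ((hnonneg _).trans hm)
      _ = c ^ (m + n) := (pow_add c m n).symm

/-- For a submultiplicative matrix norm `ν`, with
`α_p(A) = max(ν(A^p)^{1/p}, ν(A^{p+1})^{1/(p+1)})`, every integer `k ≥ p(p−1)` with
`k ≥ 1` satisfies `ν(A^k)^{1/k} ≤ α_p(A)`. -/
theorem norm_power_alpha_bound (N : ℕ) (A : Matrix (Fin N) (Fin N) ℂ)
    (ν : Matrix (Fin N) (Fin N) ℂ → ℝ)
    (hnonneg : ∀ M, 0 ≤ ν M)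
    (hmul : ∀ M₁ M₂, ν (M₁ * M₂) ≤ ν M₁ * ν M₂)
    (p : ℕ) (hp : 1 ≤ p) (k : ℕ) (hk1 : 1 ≤ k) (hk : p * (p - 1) ≤ k) :
    ν (A ^ k) ^ ((1 : ℝ) / k) ≤
      max (ν (A ^ p) ^ ((1 : ℝ) / p)) (ν (A ^ (p + 1)) ^ ((1 : ℝ) / (p + 1))) := by
  set α := max (ν (A ^ p) ^ ((1 : ℝ) / p)) (ν (A ^ (p + 1)) ^ ((1 : ℝ) / (p + 1)))
  have hα : 0 ≤ α := (rpow_nonneg (hnonneg _) _).trans (le_max_left _ _)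
  have hgen : ∀ n ∈ ({p, p + 1} : Set ℕ), ν (A ^ n) ≤ α ^ n := by
    rintro n (rfl | rfl)
    · exact (rpow_one_div_le_iff_le_pow (hnonneg _) hα (by omega)).1 (le_max_left _ _)
    · refine (rpow_one_div_le_iff_le_pow (hnonneg _) hα (by omega)).1 ?_
      rw [Nat.cast_add_one]
      exact le_max_right _ _
  refine (rpow_one_div_le_iff_le_pow (hnonneg _) hα (by omega)).2 ?_
  exact pow_le_pow_of_mem_addSubmonoidClosure hnonneg hmul hgen
    (Nat.mem_addSubmonoidClosure_pair_of_mul_pred_le hk) (by omega)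
end

section
/- Suppose the modified squaring approximation to φ(A) is exact at the scaled level in the sense T̃_m(X) = e^{X + h(X)} with X = 2^{-s}A, where h(X) is a matrix commuting with A. Then, for invertible A, 2^{-s}·T_m(X)·∏_{i=0}^{s-1}(T̃_m(X)^{2^i} + I) = (e^{A + ΔA} − I)·A^{-1}, where ΔA = 2^s·h(X) and T_m(X) = (T̃_m(X) − I)·X^{-1} whenever X is invertible. -/
/-!
Write `T̃ = X T + 1` with `X = 2⁻ˢ A`. Since `X` commutes with `T`, hence with `T̃`, the factor
`X` can be moved next to `T`, and `X T = T̃ - 1` telescopes against the product: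
`(t - 1) ∏_{i<s} (t^{2^i} + 1) = t^{2^s} - 1`. Finally `T̃^{2^s} = e^{2^s (X + h)} = e^{A + 2^s h}`,
and multiplying by `A⁻¹` on the right gives the claim.
-/

lemma sub_one_mul_prod_pow_two_pow_add_one {R : Type*} [Ring R] (t : R) (s : ℕ) :
    (t - 1) * ((List.range s).map fun i => t ^ 2 ^ i + 1).prod = t ^ 2 ^ s - 1 := by
  induction s with
  | zero => simp
  | succ s ih =>
    rw [List.range_succ, List.map_append, List.prod_append, ← mul_assoc, ih]
    simp only [List.map_cons, List.map_nil, List.prod_cons, List.prod_nil, mul_one]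
    rw [pow_succ, pow_mul, sq]
    noncomm_ring

lemma Commute.prod_pow_two_pow_add_one_right {R : Type*} [Ring R] {x t : R} (h : Commute x t)
    (s : ℕ) : Commute x ((List.range s).map fun i => t ^ 2 ^ i + 1).prod :=
  Commute.list_prod_right _ _ fun _ hy => by
    obtain ⟨i, -, rfl⟩ := List.mem_map.mp hy
    exact (h.pow_right _).add_right (Commute.one_right x)

lemma Commute.mul_prod_pow_two_pow_add_one_mul {R : Type*} [Ring R] {x τ : R}
    (h : Commute x τ) (s : ℕ) :
    τ * ((List.range s).map fun i => (x * τ + 1) ^ 2 ^ i + 1).prod * x =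
      (x * τ + 1) ^ 2 ^ s - 1 := by
  have hx : Commute x (x * τ + 1) := ((Commute.refl x).mul_right h).add_right (Commute.one_right x)
  rw [mul_assoc, ← (hx.prod_pow_two_pow_add_one_right s).eq, ← mul_assoc, ← h.eq,
    ← sub_one_mul_prod_pow_two_pow_add_one, add_sub_cancel_right]

theorem backward_error_form_general (N : ℕ) (A : Matrix (Fin N) (Fin N) ℂ) (hA : IsUnit A)
    (s m : ℕ) (X T Tt h : Matrix (Fin N) (Fin N) ℂ)
    (hX : X = ((2 : ℂ) ^ s)⁻¹ • A)
    (hT : T = ∑ k ∈ Finset.range (m + 1), ((Nat.factorial (k + 1) : ℂ))⁻¹ • X ^ k)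
    (hTt : Tt = X * T + 1)
    (hexp : Tt = NormedSpace.exp (X + h)) :
    ((2 : ℂ) ^ s)⁻¹ • (T * ((List.range s).map (fun i => Tt ^ 2 ^ i + 1)).prod) =
      (NormedSpace.exp (A + (2 : ℂ) ^ s • h) - 1) * A⁻¹ := by
  have hAX : A = (2 : ℂ) ^ s • X := by
    rw [hX, smul_smul, mul_inv_cancel₀ (pow_ne_zero s two_ne_zero), one_smul]
  have hXT : Commute X T := hT ▸
    Commute.sum_right _ _ _ fun k _ => ((Commute.refl X).pow_right k).smul_right _
  have hsquare : Tt ^ 2 ^ s = NormedSpace.exp (A + (2 : ℂ) ^ s • h) := by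
    rw [hexp, ← Matrix.exp_nsmul, hAX, ← smul_add, ← Nat.cast_smul_eq_nsmul ℂ, Nat.cast_pow,
      Nat.cast_ofNat]
  have hmulA : ((2 : ℂ) ^ s)⁻¹ • (T * ((List.range s).map (fun i => Tt ^ 2 ^ i + 1)).prod) * A =
      Tt ^ 2 ^ s - 1 := by
    rw [Matrix.smul_mul, ← Matrix.mul_smul, ← hX, hTt,
      hXT.mul_prod_pow_two_pow_add_one_mul]
  rw [← hsquare, ← hmulA,
    Matrix.mul_nonsing_inv_cancel_right _ _ ((Matrix.isUnit_iff_isUnit_det A).mp hA)]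

/-- Suppose `T̃_m(X) = e^{X+h}` with `X = 2^{-s}A`, where `h` commutes with
`A`. Then, for invertible `A`,
`2^{-s}·T_m(X)·∏_{i=0}^{s-1}(T̃_m(X)^{2^i}+I) = (e^{A+ΔA} − I)·A⁻¹` with `ΔA = 2^s·h`. -/
theorem backward_error_form (N : ℕ) (A : Matrix (Fin N) (Fin N) ℂ) (hA : IsUnit A)
    (s m : ℕ) (X T Tt h : Matrix (Fin N) (Fin N) ℂ)
    (hX : X = ((2 : ℂ) ^ s)⁻¹ • A)
    (hT : T = ∑ k ∈ Finset.range (m + 1), ((Nat.factorial (k + 1) : ℂ))⁻¹ • X ^ k)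
    (hTt : Tt = X * T + 1)
    (hcomm : Commute A h)
    (hexp : Tt = NormedSpace.exp (X + h)) :
    ((2 : ℂ) ^ s)⁻¹ • (T * ((List.range s).map (fun i => Tt ^ 2 ^ i + 1)).prod) =
      (NormedSpace.exp (A + (2 : ℂ) ^ s • h) - 1) * A⁻¹ :=
  backward_error_form_general N A hA s m X T Tt h hX hT hTt hexp
end
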